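/- arXiv:1309.1495 — 2 statements merged into one kernel-verified Lean document; each statement's English description precedes it below -/
import Mathlib

section
/- Let q = p^ℓ be an odd prime power, d > 2, and t ∈ Z/qZ. Write S_t = {x ∈ (Z/qZ)^d : x₁² + ⋯ + x_d² = t}. Then |S_t| = q^{d−1} + II_t where |II_t| ≤ ℓ · q^{d−1} · q^{(1/ℓ)(1 − d/2)}. In particular |S_t| = q^{d−1}(1 + o(1)). -/
/-!
Expanding the indicator of `∑ xᵢ² = t` in the additive characters `ψ` of `ℤ/qℤ` gives
`q · |S_t| = ∑_a ψ(-a t) G(a)^d` with `G(a) = ∑_x ψ(a x²)`, and the term `a = 0` is `q^d`.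
Since `2` is invertible, `|G(a)|² = q · #{h | a h = 0} ≤ q · p^k` when `p^k ∥ a`. At most `p^(ℓ-k)`
residues have valuation `k`, and for `d ≥ 2` the valuation `ℓ - 1` contributes the most, so the
terms `a ≠ 0` add up to at most `ℓ · p · (q p^(ℓ-1))^(d/2) = ℓ · q · q^(d-1) · p^(1 - d/2)`.
-/

open Finset

theorem AddChar.map_sum_eq_prod {ι A M : Type*} [AddCommMonoid A] [CommMonoid M]
    (ψ : AddChar A M) (s : Finset ι) (f : ι → A) :
    ψ (∑ i ∈ s, f i) = ∏ i ∈ s, ψ (f i) := by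
  classical
  induction s using Finset.induction with
  | empty => simp
  | insert i s hi ih => rw [sum_insert hi, prod_insert hi, AddChar.map_add_eq_mul, ih]

theorem ZMod.isUnit_two_of_odd {n : ℕ} (hn : Odd n) : IsUnit (2 : ZMod n) := by
  simpa using (ZMod.isUnit_iff_coprime 2 n).2 (Nat.coprime_two_left.2 hn)

theorem ZMod.card_mul_eq_zero_le_gcd {n : ℕ} [NeZero n] (a : ZMod n) :
    #{h : ZMod n | a * h = 0} ≤ a.val.gcd n := by
  refine (card_le_card fun h hh => ?_).trans
    (IsAddCyclic.card_nsmul_eq_zero_le (Nat.gcd_pos_of_pos_right _ (NeZero.pos n)))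
  simp only [mem_filter, mem_univ, true_and] at hh ⊢
  rw [← addOrderOf_dvd_iff_nsmul_eq_zero, Nat.dvd_gcd_iff, addOrderOf_dvd_iff_nsmul_eq_zero,
    addOrderOf_dvd_iff_nsmul_eq_zero, nsmul_eq_mul, nsmul_eq_mul, ZMod.natCast_zmod_val,
    ZMod.natCast_self]
  exact ⟨hh, zero_mul h⟩

namespace SphereCount

open ZMod

variable {q : ℕ} [NeZero q]

noncomputable def quadGaussSum (a : ZMod q) : ℂ := ∑ x, stdAddChar (a * x ^ 2)

theorem sum_stdAddChar_mul (b : ZMod q) :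
    ∑ a : ZMod q, stdAddChar (a * b) = if b = 0 then (q : ℂ) else 0 := by
  simpa [ZMod.card] using AddChar.sum_mulShift b (isPrimitive_stdAddChar q)

theorem quadGaussSum_mul_conj (h2 : IsUnit (2 : ZMod q)) (a : ZMod q) :
    quadGaussSum a * starRingEnd ℂ (quadGaussSum a) = q * #{h : ZMod q | a * h = 0} := by
  -- substitute `x = y + h`: then `a x² - a y² = a h² + (2 a h) y`, and summing over `y` kills `h`
  -- unless `2 a h = 0`
  have shift (y : ZMod q) : ∑ x, stdAddChar (a * x ^ 2) * stdAddChar (-(a * y ^ 2)) =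
      ∑ h, (stdAddChar (a * h ^ 2) * stdAddChar (y * (2 * a * h)) : ℂ) := by
    refine (Fintype.sum_equiv (Equiv.addLeft y) _ _ fun h => ?_).symm
    rw [← AddChar.map_add_eq_mul, ← AddChar.map_add_eq_mul, Equiv.coe_addLeft]
    ring_nf
  have vanish (h : ZMod q) : (stdAddChar (a * h ^ 2) : ℂ) * (if 2 * a * h = 0 then (q : ℂ) else 0)
      = if a * h = 0 then (q : ℂ) else 0 := by
    simp only [mul_assoc, h2.mul_right_eq_zero]
    split_ifs with hah
    · rw [sq, ← mul_assoc, hah, zero_mul, AddChar.map_zero_eq_one, one_mul]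
    · rw [mul_zero]
  calc quadGaussSum a * starRingEnd ℂ (quadGaussSum a)
      = ∑ y, ∑ x, stdAddChar (a * x ^ 2) * stdAddChar (-(a * y ^ 2)) := by
        simp_rw [quadGaussSum, map_sum, ← AddChar.map_neg_eq_conj, sum_mul_sum]
        exact sum_comm
    _ = ∑ h, stdAddChar (a * h ^ 2) * ∑ y, stdAddChar (y * (2 * a * h)) := by
        simp_rw [shift, mul_sum]
        exact sum_comm
    _ = ∑ h, if a * h = 0 then (q : ℂ) else 0 := by
        simp_rw [sum_stdAddChar_mul, vanish]
    _ = q * #{h : ZMod q | a * h = 0} := by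
        rw [← sum_filter, sum_const, nsmul_eq_mul, mul_comm]

theorem norm_quadGaussSum_sq (h2 : IsUnit (2 : ZMod q)) (a : ZMod q) :
    ‖quadGaussSum a‖ ^ 2 = q * #{h : ZMod q | a * h = 0} := by
  exact_mod_cast (Complex.mul_conj' _).symm.trans (quadGaussSum_mul_conj h2 a)

theorem card_sphere_mul (d : ℕ) (t : ZMod q) :
    q * #{x : Fin d → ZMod q | ∑ i, x i ^ 2 = t} =
      ∑ a : ZMod q, stdAddChar (-(a * t)) * quadGaussSum a ^ d := by
  have factor (a : ZMod q) (x : Fin d → ZMod q) :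
      stdAddChar (a * (∑ i, x i ^ 2 - t)) =
        stdAddChar (-(a * t)) * ∏ i, (stdAddChar (a * x i ^ 2) : ℂ) := by
    rw [← AddChar.map_sum_eq_prod, ← AddChar.map_add_eq_mul, mul_sub, mul_sum]
    ring_nf
  calc (q : ℂ) * #{x : Fin d → ZMod q | ∑ i, x i ^ 2 = t}
      = ∑ x : Fin d → ZMod q, ∑ a : ZMod q, stdAddChar (a * (∑ i, x i ^ 2 - t)) := by
        simp_rw [sum_stdAddChar_mul, sub_eq_zero]
        rw [← sum_filter, sum_const, nsmul_eq_mul, mul_comm]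
    _ = ∑ a : ZMod q, stdAddChar (-(a * t)) * quadGaussSum a ^ d := by
        rw [sum_comm]
        simp_rw [factor, ← mul_sum, quadGaussSum, sum_pow', Fintype.piFinset_univ]

theorem abs_card_sphere_sub_le {d : ℕ} (hd : d ≠ 0) (t : ZMod q) :
    q * |(#{x : Fin d → ZMod q | ∑ i, x i ^ 2 = t} : ℝ) - (q : ℝ) ^ (d - 1)| ≤
      ∑ a ∈ univ.erase 0, ‖quadGaussSum (a : ZMod q)‖ ^ d := by
  have main : (q : ℂ) * ((#{x : Fin d → ZMod q | ∑ i, x i ^ 2 = t} : ℂ) - (q : ℂ) ^ (d - 1)) =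
      ∑ a ∈ univ.erase 0, stdAddChar (-(a * t)) * quadGaussSum a ^ d := by
    have hzero : quadGaussSum (0 : ZMod q) = q := by simp [quadGaussSum, ZMod.card]
    rw [mul_sub, card_sphere_mul, ← add_sum_erase _ _ (mem_univ 0), hzero, ← pow_succ',
      Nat.sub_add_cancel (Nat.one_le_iff_ne_zero.2 hd)]
    simp
  calc (q : ℝ) * |(#{x : Fin d → ZMod q | ∑ i, x i ^ 2 = t} : ℝ) - (q : ℝ) ^ (d - 1)|
      = ‖∑ a ∈ univ.erase 0, stdAddChar (-(a * t)) * quadGaussSum a ^ d‖ := by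
        rw [← main, norm_mul, Complex.norm_natCast, ← Real.norm_eq_abs, ← Complex.norm_real]
        push_cast
        rfl
    _ ≤ ∑ a ∈ univ.erase 0, ‖quadGaussSum (a : ZMod q)‖ ^ d := by
        refine (norm_sum_le _ _).trans (sum_le_sum fun a _ => ?_)
        rw [norm_mul, AddChar.norm_apply, one_mul, norm_pow]

section PrimePower

variable {p ℓ : ℕ} [NeZero p]

theorem factorization_val_lt (hp : p.Prime) {a : ZMod (p ^ ℓ)} (ha : a ≠ 0) :
    a.val.factorization p < ℓ := by
  by_contra! h
  have hdvd := (hp.pow_dvd_iff_le_factorization ((ZMod.val_ne_zero a).2 ha)).2 h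
  exact (ZMod.val_lt a).not_ge (Nat.le_of_dvd (ZMod.val_pos.2 ha) hdvd)

theorem card_mul_eq_zero_le_pow_factorization (hp : p.Prime) {a : ZMod (p ^ ℓ)} (ha : a ≠ 0) :
    #{h : ZMod (p ^ ℓ) | a * h = 0} ≤ p ^ a.val.factorization p := by
  refine (ZMod.card_mul_eq_zero_le_gcd a).trans ?_
  obtain ⟨i, -, hi⟩ := (Nat.dvd_prime_pow hp).1 (Nat.gcd_dvd_right a.val (p ^ ℓ))
  have hdvd : p ^ i ∣ a.val := hi ▸ Nat.gcd_dvd_left _ _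
  rw [hi]
  exact Nat.pow_le_pow_right hp.pos
    ((hp.pow_dvd_iff_le_factorization ((ZMod.val_ne_zero a).2 ha)).1 hdvd)

theorem card_factorization_val_eq_le {k : ℕ} (hk : k ≤ ℓ) :
    #{a : ZMod (p ^ ℓ) | a.val.factorization p = k} ≤ p ^ (ℓ - k) := by
  refine (card_le_card fun a ha => ?_).trans
    (IsAddCyclic.card_nsmul_eq_zero_le (pow_pos (NeZero.pos p) _))
  simp only [mem_filter, mem_univ, true_and] at ha ⊢
  have hdvd : p ^ ℓ ∣ p ^ (ℓ - k) * a.val :=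
    calc p ^ ℓ = p ^ (ℓ - k) * p ^ k := by rw [← pow_add, Nat.sub_add_cancel hk]
      _ ∣ p ^ (ℓ - k) * a.val := mul_dvd_mul_left _ (ha ▸ Nat.ordProj_dvd _ _)
  rw [← (ZMod.natCast_eq_zero_iff _ _).2 hdvd, Nat.cast_mul, natCast_zmod_val, nsmul_eq_mul]

theorem norm_quadGaussSum_pow_le (hp : p.Prime) (h2 : IsUnit (2 : ZMod (p ^ ℓ)))
    {a : ZMod (p ^ ℓ)} (ha : a ≠ 0) (d : ℕ) :
    ‖quadGaussSum a‖ ^ d ≤ (p : ℝ) ^ ((ℓ + a.val.factorization p) * d / 2 : ℝ) := by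
  have hsq : ‖quadGaussSum a‖ ^ 2 ≤ (p : ℝ) ^ (ℓ + a.val.factorization p) := by
    rw [norm_quadGaussSum_sq h2, pow_add]
    push_cast
    gcongr
    exact_mod_cast card_mul_eq_zero_le_pow_factorization hp ha
  calc ‖quadGaussSum a‖ ^ d = (‖quadGaussSum a‖ ^ 2) ^ ((d : ℝ) / 2) := by
        rw [← Real.rpow_natCast _ 2, ← Real.rpow_mul (norm_nonneg _), Nat.cast_ofNat,
          mul_div_cancel₀ _ two_ne_zero, Real.rpow_natCast]
    _ ≤ ((p : ℝ) ^ (ℓ + a.val.factorization p)) ^ ((d : ℝ) / 2) := by gcongr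
    _ = (p : ℝ) ^ ((ℓ + a.val.factorization p) * d / 2 : ℝ) := by
        rw [← Real.rpow_natCast, ← Real.rpow_mul (Nat.cast_nonneg p)]
        push_cast
        ring_nf

theorem sum_norm_quadGaussSum_pow_le (hp : p.Prime) (h2 : IsUnit (2 : ZMod (p ^ ℓ)))
    {d : ℕ} (hd : 2 ≤ d) :
    ∑ a ∈ univ.erase 0, ‖quadGaussSum (a : ZMod (p ^ ℓ))‖ ^ d ≤
      ℓ * (p : ℝ) ^ (1 + (2 * ℓ - 1) * d / 2 : ℝ) := by
  set v : ZMod (p ^ ℓ) → ℕ := fun a => a.val.factorization p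
  have hmaps : ∀ a ∈ univ.erase 0, v a ∈ range ℓ := fun a ha =>
    mem_range.2 (factorization_val_lt hp (ne_of_mem_erase ha))
  -- the exponent `(ℓ - k) + (ℓ + k) d / 2` is nondecreasing in `k` because `d ≥ 2`
  have hfibre (k : ℕ) (hk : k < ℓ) : (#{a ∈ univ.erase 0 | v a = k} : ℝ) *
      (p : ℝ) ^ ((ℓ + k) * d / 2 : ℝ) ≤ (p : ℝ) ^ (1 + (2 * ℓ - 1) * d / 2 : ℝ) := by
    have hcard : #{a ∈ univ.erase 0 | v a = k} ≤ p ^ (ℓ - k) :=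
      (card_le_card (filter_subset_filter _ (erase_subset _ _))).trans
        (card_factorization_val_eq_le hk.le)
    have hp1 : (1 : ℝ) ≤ p := by exact_mod_cast hp.one_lt.le
    calc (#{a ∈ univ.erase 0 | v a = k} : ℝ) * (p : ℝ) ^ ((ℓ + k) * d / 2 : ℝ)
        ≤ (p : ℝ) ^ (ℓ - k) * (p : ℝ) ^ ((ℓ + k) * d / 2 : ℝ) := by
          gcongr
          exact_mod_cast hcard
      _ = (p : ℝ) ^ ((ℓ - k : ℝ) + (ℓ + k) * d / 2) := by
          rw [← Real.rpow_natCast, ← Real.rpow_add (by positivity), Nat.cast_sub hk.le]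
      _ ≤ (p : ℝ) ^ (1 + (2 * ℓ - 1) * d / 2 : ℝ) := by
          refine Real.rpow_le_rpow_of_exponent_le hp1 ?_
          have hk' : (k : ℝ) + 1 ≤ ℓ := by exact_mod_cast hk
          have hd' : (2 : ℝ) ≤ d := by exact_mod_cast hd
          nlinarith
  calc ∑ a ∈ univ.erase 0, ‖quadGaussSum (a : ZMod (p ^ ℓ))‖ ^ d
      ≤ ∑ a ∈ univ.erase 0, (p : ℝ) ^ ((ℓ + v a) * d / 2 : ℝ) :=
        sum_le_sum fun a ha => norm_quadGaussSum_pow_le hp h2 (ne_of_mem_erase ha) d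
    _ = ∑ k ∈ range ℓ, (#{a ∈ univ.erase 0 | v a = k} : ℝ) * (p : ℝ) ^ ((ℓ + k) * d / 2 : ℝ) := by
        rw [← sum_fiberwise_of_maps_to' hmaps fun k : ℕ => (p : ℝ) ^ ((ℓ + k) * d / 2 : ℝ)]
        simp only [sum_const, nsmul_eq_mul]
    _ ≤ ∑ _k ∈ range ℓ, (p : ℝ) ^ (1 + (2 * ℓ - 1) * d / 2 : ℝ) :=
        sum_le_sum fun k hk => hfibre k (mem_range.1 hk)
    _ = ℓ * (p : ℝ) ^ (1 + (2 * ℓ - 1) * d / 2 : ℝ) := by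
        rw [sum_const, card_range, nsmul_eq_mul]

end PrimePower

end SphereCount

/-- For `q = p^ℓ` an odd prime power, `d > 2`, `t ∈ ℤ/qℤ`, the sphere
`S_t = {x ∈ (ℤ/qℤ)^d : ∑ xᵢ² = t}` satisfies `|S_t| = q^{d−1} + II_t` with
`|II_t| ≤ ℓ · q^{d−1} · q^{(1/ℓ)(1 − d/2)}`. -/
theorem stmt_9 (p ℓ d : ℕ) (hp : p.Prime) (hodd : Odd p) (hℓ : 1 ≤ ℓ) (hd : 2 < d)
    (t : ZMod (p ^ ℓ)) :
    ∃ II : ℝ,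
      (Nat.card {x : Fin d → ZMod (p ^ ℓ) // ∑ i, (x i) ^ 2 = t} : ℝ) =
        ((p : ℝ) ^ ℓ) ^ (d - 1) + II ∧
      |II| ≤ (ℓ : ℝ) * ((p : ℝ) ^ ℓ) ^ (d - 1) *
          ((p : ℝ) ^ ℓ) ^ ((1 / (ℓ : ℝ)) * (1 - (d : ℝ) / 2)) := by
  have : NeZero p := ⟨hp.ne_zero⟩
  have hp0 : (0 : ℝ) < p := by exact_mod_cast hp.pos
  have h2 : IsUnit (2 : ZMod (p ^ ℓ)) := ZMod.isUnit_two_of_odd hodd.pow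
  have hbound := (SphereCount.abs_card_sphere_sub_le (by omega) t).trans
    (SphereCount.sum_norm_quadGaussSum_pow_le hp h2 hd.le)
  push_cast at hbound
  rw [Nat.card_eq_fintype_card, Fintype.card_subtype]
  refine ⟨_, (add_sub_cancel _ _).symm, le_of_mul_le_mul_left (hbound.trans_eq ?_) (by positivity)⟩
  have hexp : (1 + (2 * ℓ - 1) * d / 2 : ℝ) = ℓ + (ℓ * (d - 1) + ℓ * (1 / ℓ * (1 - d / 2))) := by
    have : (ℓ : ℝ) ≠ 0 := Nat.cast_ne_zero.2 (by omega)
    field_simp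
    ring
  simp only [← Real.rpow_natCast, ← Real.rpow_mul hp0.le]
  rw [Nat.cast_sub (by omega : 1 ≤ d), Nat.cast_one, hexp, Real.rpow_add hp0, Real.rpow_add hp0]
  ring
end

section
/- Let q be odd with smallest prime factor p₁, d > 2, and t ∈ Z/qZ. For every m ∈ (Z/qZ)^d with m ≠ 0, the Fourier transform of the sphere indicator satisfies |Ŝ_t(m)| ≤ q^{−1} τ(q) p₁^{−(d−2)/2}, where τ(q) is the number of positive divisors of q. -/
/-!
Write `ψ` for the standard additive character of `ℤ/qℤ` and `T = q^d Ŝ_t(m)`. Detecting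
the sphere by orthogonality of characters gives `q T = ∑_j ψ(-jt) ∏_i G(j, -mᵢ)` with the
quadratic sums `G(j, b) = ∑_y ψ(j y² + b y)`, and the term `j = 0` vanishes because `m ≠ 0`. Weyl
differencing gives `|G(j, b)|² ≤ q · #{h : 2jh = 0} = q · gcd(q, j)` for odd `q`. For `j ≠ 0`
the cofactor `q / gcd(q, j)` is a divisor `> 1` of `q`, hence at least `p₁`, so the `j`-th term
is at most `q^d (gcd(q, j) / q) p₁^{-(d-2)/2}`; finally
`∑_j gcd(q, j) = ∑_{g ∣ q} g φ(q/g) ≤ q τ(q)`.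
-/

open Finset

noncomputable def chi (q : ℕ) (x : ZMod q) : ℂ :=
  Complex.exp (2 * Real.pi * Complex.I * (x.val : ℂ) / (q : ℂ))

namespace AddChar

lemma map_sum_eq_prod_s12 {A M ι : Type*} [AddCommMonoid A] [CommMonoid M] (ψ : AddChar A M)
    (s : Finset ι) (f : ι → A) : ψ (∑ i ∈ s, f i) = ∏ i ∈ s, ψ (f i) :=
  map_prod ψ.toMonoidHom (fun i => Multiplicative.ofAdd (f i)) s

variable {R : Type*} [CommRing R] [Fintype R] [DecidableEq R] {ψ : AddChar R ℂ}

lemma norm_sum_quadratic_sq_le (hψ : ψ.IsPrimitive) (a b : R) :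
    ‖∑ x, ψ (a * x ^ 2 + b * x)‖ ^ 2 ≤ Fintype.card R * #{h | 2 * a * h = 0} := by
  set S := ∑ x, ψ (a * x ^ 2 + b * x)
  have hdiff : S * (starRingEnd ℂ) S =
      ∑ h, ψ (a * h ^ 2 + b * h) * ∑ y, ψ (y * (2 * a * h)) := by
    rw [map_sum, sum_mul_sum, sum_comm]
    simp only [Finset.mul_sum]
    conv_rhs => rw [sum_comm]
    refine sum_congr rfl fun y _ => (Fintype.sum_equiv (Equiv.addLeft y) _ _ fun h => ?_).symm
    rw [← map_neg_eq_conj, ← map_add_eq_mul, ← map_add_eq_mul, Equiv.coe_addLeft]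
    ring_nf
  calc ‖S‖ ^ 2 = ‖∑ h, ψ (a * h ^ 2 + b * h) * ∑ y, ψ (y * (2 * a * h))‖ := by
        rw [← hdiff, norm_mul, Complex.norm_conj, sq]
    _ ≤ ∑ h, ‖ψ (a * h ^ 2 + b * h) * ∑ y, ψ (y * (2 * a * h))‖ := norm_sum_le _ _
    _ = ∑ h, if 2 * a * h = 0 then (Fintype.card R : ℝ) else 0 := by
        refine sum_congr rfl fun h _ => ?_
        rw [norm_mul, norm_apply, one_mul, sum_mulShift _ hψ]
        split_ifs <;> simp
    _ = Fintype.card R * #{h | 2 * a * h = 0} := by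
        rw [sum_ite, sum_const_zero, add_zero, sum_const, nsmul_eq_mul, mul_comm]

variable {ι : Type*} [Fintype ι] [DecidableEq ι]

lemma card_mul_sum_sphere (hψ : ψ.IsPrimitive) (t : R) (m : ι → R) :
    Fintype.card R * ∑ x ∈ univ.filter (fun x : ι → R => ∑ i, x i ^ 2 = t),
        ψ (-∑ i, x i * m i) =
      ∑ j, ψ (-(j * t)) * ∏ i, ∑ y, ψ (j * y ^ 2 - m i * y) := by
  calc _ = ∑ x : ι → R, ∑ j, ψ (j * (∑ i, x i ^ 2 - t)) * ψ (-∑ i, x i * m i) := by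
        simp only [← sum_mul, sum_mulShift _ hψ, sub_eq_zero, Nat.cast_ite, Nat.cast_zero,
          ite_mul, zero_mul, ← sum_filter, mul_sum]
    _ = ∑ j, ∑ x : ι → R, ψ (-(j * t)) * ∏ i, ψ (j * x i ^ 2 - m i * x i) := by
        rw [sum_comm]
        refine sum_congr rfl fun j _ => sum_congr rfl fun x _ => ?_
        rw [← map_sum_eq_prod_s12, ← map_add_eq_mul, ← map_add_eq_mul, sum_sub_distrib, ← mul_sum]
        simp only [mul_comm (m _)]
        ring_nf
    _ = _ := by
        simp only [prod_univ_sum, Fintype.piFinset_univ, mul_sum]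

lemma card_mul_norm_sum_sphere_le (hψ : ψ.IsPrimitive) (t : R) {m : ι → R} (hm : m ≠ 0) :
    Fintype.card R * ‖∑ x ∈ univ.filter (fun x : ι → R => ∑ i, x i ^ 2 = t),
        ψ (-∑ i, x i * m i)‖ ≤
      ∑ j ∈ univ.erase 0, ∏ i, ‖∑ y, ψ (j * y ^ 2 - m i * y)‖ := by
  obtain ⟨i₀, hi₀⟩ := Function.ne_iff.mp hm
  have hzero : ∏ i, ∑ y, ψ (0 * y ^ 2 - m i * y) = 0 := by
    refine prod_eq_zero (mem_univ i₀) ?_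
    simp only [zero_mul, zero_sub, ← mul_neg, mul_comm (m i₀), sum_mulShift _ hψ]
    simpa using hi₀
  rw [← Complex.norm_natCast, ← norm_mul, card_mul_sum_sphere hψ,
    ← add_sum_erase _ _ (mem_univ 0), hzero, mul_zero, zero_add]
  refine (norm_sum_le _ _).trans_eq (sum_congr rfl fun j _ => ?_)
  rw [norm_mul, norm_apply, one_mul, norm_prod]

end AddChar

lemma sqrt_mul_pow_le_of_mul_le {q g p : ℝ} (hq : 0 < q) (hg : 0 ≤ g) (hp : 0 < p)
    (hpg : p * g ≤ q) {d : ℕ} (hd : 2 ≤ d) :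
    √(q * g) ^ d ≤ q ^ d * (g / q) * p ^ (-(((d : ℝ) - 2) / 2)) := by
  obtain ⟨k, rfl⟩ := Nat.exists_eq_add_of_le hd
  have hx : 0 ≤ g / q := div_nonneg hg hq.le
  have hsqrt : √(q * g) = q * √(g / q) := by
    rw [← Real.sqrt_sq hq.le, ← Real.sqrt_mul (sq_nonneg q), Real.sqrt_sq hq.le]
    congr 1
    field_simp
  have hpow : p ^ (-((((2 + k : ℕ) : ℝ) - 2) / 2)) = √p⁻¹ ^ k := by
    rw [Real.sqrt_eq_rpow, ← Real.rpow_natCast, ← Real.rpow_mul (inv_nonneg.mpr hp.le),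
      Real.inv_rpow hp.le, ← Real.rpow_neg hp.le]
    push_cast
    ring_nf
  rw [hsqrt, hpow, mul_pow, pow_add (√(g / q)), Real.sq_sqrt hx, mul_assoc]
  gcongr
  rw [div_le_iff₀ hq, inv_mul_eq_div, le_div_iff₀ hp]
  linarith

namespace ZMod

variable {q : ℕ} [NeZero q]

lemma chi_eq_stdAddChar (x : ZMod q) : chi q x = stdAddChar x := by
  rw [stdAddChar_apply, toCircle_apply, chi]

lemma card_mul_eq_zero_le_gcd_s12 (j : ZMod q) : #{h : ZMod q | j * h = 0} ≤ q.gcd j.val := by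
  have hiff : ∀ h : ZMod q, j * h = 0 ↔ q.gcd j.val • h = 0 := fun h => by
    have hq : addOrderOf h ∣ q := by simpa using addOrderOf_dvd_card (x := h)
    rw [← addOrderOf_dvd_iff_nsmul_eq_zero, Nat.dvd_gcd_iff, and_iff_right hq,
      addOrderOf_dvd_iff_nsmul_eq_zero, nsmul_eq_mul, natCast_zmod_val]
  simp only [hiff]
  exact IsAddCyclic.card_nsmul_eq_zero_le (Nat.gcd_pos_of_pos_left _ (NeZero.pos q))

lemma norm_sum_stdAddChar_quadratic_le (hq : Odd q) (a b : ZMod q) :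
    ‖∑ x, stdAddChar (a * x ^ 2 + b * x)‖ ≤ √(q * q.gcd a.val) := by
  have h2 : IsUnit (2 : ZMod q) := by
    simpa using (isUnit_iff_coprime 2 q).mpr hq.coprime_two_left
  have hker : #{h : ZMod q | 2 * a * h = 0} = #{h : ZMod q | a * h = 0} := by
    simp only [mul_assoc, h2.mul_right_eq_zero]
  refine Real.le_sqrt_of_sq_le
    ((AddChar.norm_sum_quadratic_sq_le (isPrimitive_stdAddChar q) a b).trans ?_)
  rw [hker, card]
  gcongr
  exact_mod_cast card_mul_eq_zero_le_gcd_s12 a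

lemma minFac_mul_gcd_val_le {j : ZMod q} (hj : j ≠ 0) : q.minFac * q.gcd j.val ≤ q := by
  have hlt : q.gcd j.val < q := (Nat.gcd_le_right _ (val_pos.mpr hj)).trans_lt (val_lt j)
  obtain ⟨r, hr⟩ := Nat.gcd_dvd_left q j.val
  generalize q.gcd j.val = g at hr hlt ⊢
  have hr0 : r ≠ 0 := by rintro rfl; exact NeZero.ne q (by simpa using hr)
  have hr1 : r ≠ 1 := by rintro rfl; omega
  calc q.minFac * g ≤ r * g :=
        Nat.mul_le_mul_right _ (Nat.minFac_le_of_dvd (by omega) (Dvd.intro_left g hr.symm))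
    _ = q := by rw [mul_comm, ← hr]

lemma sum_gcd_val_le : ∑ j : ZMod q, q.gcd j.val ≤ q * #q.divisors := by
  have hval : ∑ j : ZMod q, q.gcd j.val = ∑ k ∈ range q, q.gcd k :=
    sum_nbij val (fun j _ => mem_range.mpr (val_lt j)) (fun a _ b _ h => val_injective q h)
      (fun k hk => ⟨k, mem_univ _, val_cast_of_lt (mem_range.mp hk)⟩) (fun _ _ => rfl)
  rw [hval, ← sum_fiberwise_of_maps_to (g := q.gcd) (t := q.divisors)
    (fun k _ => Nat.mem_divisors.mpr ⟨Nat.gcd_dvd_left _ _, NeZero.ne q⟩), mul_comm,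
    ← smul_eq_mul, ← sum_const]
  refine sum_le_sum fun g hg => ?_
  have hgq : g ∣ q := Nat.dvd_of_mem_divisors hg
  calc ∑ k ∈ range q with q.gcd k = g, q.gcd k = g * (q / g).totient := by
        rw [sum_congr rfl fun k hk => (mem_filter.mp hk).2, sum_const, smul_eq_mul,
          Nat.totient_div_of_dvd hgq, mul_comm]
    _ ≤ g * (q / g) := Nat.mul_le_mul_left _ (Nat.totient_le _)
    _ = q := Nat.mul_div_cancel' hgq

lemma card_mul_norm_sum_sphere_le (hq : Odd q) {ι : Type*} [Fintype ι] [DecidableEq ι]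
    (hι : 2 ≤ Fintype.card ι) (t : ZMod q) {m : ι → ZMod q} (hm : m ≠ 0) :
    q * ‖∑ x ∈ univ.filter (fun x : ι → ZMod q => ∑ i, x i ^ 2 = t),
        stdAddChar (-∑ i, x i * m i)‖ ≤
      q ^ Fintype.card ι * #q.divisors * q.minFac ^ (-(((Fintype.card ι : ℝ) - 2) / 2)) := by
  set d := Fintype.card ι
  set e : ℝ := -(((d : ℝ) - 2) / 2)
  have hq0 : (0 : ℝ) < q := by exact_mod_cast NeZero.pos q
  have hgauss (j : ZMod q) (i : ι) :
      ‖∑ y, stdAddChar (j * y ^ 2 - m i * y)‖ ≤ √(q * q.gcd j.val) := by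
    simpa only [sub_eq_add_neg, neg_mul] using norm_sum_stdAddChar_quadratic_le hq j (-m i)
  calc (q : ℝ) * ‖_‖
      ≤ ∑ j ∈ univ.erase (0 : ZMod q), ∏ i, ‖∑ y, stdAddChar (j * y ^ 2 - m i * y)‖ := by
        simpa using AddChar.card_mul_norm_sum_sphere_le (isPrimitive_stdAddChar q) t hm
    _ ≤ ∑ j ∈ univ.erase (0 : ZMod q), √(q * q.gcd j.val) ^ d := by
        refine sum_le_sum fun j _ => ?_
        simpa only [prod_const, card_univ] using
          prod_le_prod (fun i _ => norm_nonneg _) fun i (_ : i ∈ univ) => hgauss j i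
    _ ≤ ∑ j ∈ univ.erase (0 : ZMod q),
          q ^ d * ((q.gcd j.val : ℝ) / q) * (q.minFac : ℝ) ^ e := by
        refine sum_le_sum fun j hj => sqrt_mul_pow_le_of_mul_le hq0 (Nat.cast_nonneg _)
          (by exact_mod_cast Nat.minFac_pos q) ?_ hι
        exact_mod_cast minFac_mul_gcd_val_le (ne_of_mem_erase hj)
    _ ≤ ∑ j : ZMod q, q ^ d * ((q.gcd j.val : ℝ) / q) * (q.minFac : ℝ) ^ e :=
        sum_le_sum_of_subset_of_nonneg (erase_subset _ _) fun _ _ _ => by positivity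
    _ = q ^ d * (q.minFac : ℝ) ^ e / q * ∑ j : ZMod q, (q.gcd j.val : ℝ) := by
        rw [mul_sum]
        exact sum_congr rfl fun _ _ => by ring
    _ ≤ q ^ d * (q.minFac : ℝ) ^ e / q * (q * #q.divisors) := by
        gcongr
        exact_mod_cast sum_gcd_val_le
    _ = q ^ d * #q.divisors * (q.minFac : ℝ) ^ e := by
        field_simp

end ZMod

/-- For odd `q` with smallest prime factor `p₁`, `d > 2` and `m ≠ 0`, the normalized Fourier
transform of the sphere indicator satisfies `|Ŝ_t(m)| ≤ q^{−1} τ(q) p₁^{−(d−2)/2}`. -/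
theorem stmt_12 (q d : ℕ) [NeZero q] (hq : Odd q) (hd : 2 < d)
    (t : ZMod q) (m : Fin d → ZMod q) (hm : m ≠ 0) :
    ‖(q : ℂ) ^ (-(d : ℤ)) *
        ∑ x ∈ Finset.univ.filter (fun x : Fin d → ZMod q => ∑ i, (x i) ^ 2 = t),
          chi q (-∑ i, x i * m i)‖ ≤
      (q : ℝ)⁻¹ * (q.divisors.card : ℝ) * (q.minFac : ℝ) ^ (-(((d : ℝ) - 2) / 2)) := by
  have hq0 : (0 : ℝ) < q := by exact_mod_cast NeZero.pos q
  have hbound := ZMod.card_mul_norm_sum_sphere_le hq (by simpa using hd.le) t hm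
  rw [Fintype.card_fin] at hbound
  simp only [ZMod.chi_eq_stdAddChar]
  rw [norm_mul, norm_zpow, Complex.norm_natCast, zpow_neg, zpow_natCast]
  set T := ‖∑ x ∈ univ.filter (fun x : Fin d → ZMod q => ∑ i, x i ^ 2 = t),
    ZMod.stdAddChar (-∑ i, x i * m i)‖
  set e : ℝ := -(((d : ℝ) - 2) / 2)
  calc ((q : ℝ) ^ d)⁻¹ * T = ((q : ℝ) ^ d)⁻¹ * (q : ℝ)⁻¹ * (q * T) := by
        field_simp
    _ ≤ ((q : ℝ) ^ d)⁻¹ * (q : ℝ)⁻¹ * (q ^ d * #q.divisors * (q.minFac : ℝ) ^ e) := by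
        gcongr
    _ = (q : ℝ)⁻¹ * #q.divisors * (q.minFac : ℝ) ^ e := by
        field_simp
end
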